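/- arXiv:2602.08966 — 2 statements merged into one kernel-verified Lean document; each statement's English description precedes it below -/
import Mathlib

section
/- Let v : M → ℝ be additive with v(g) ≤ 0 for all g (chores), let n ≥ 1 and d ≥ 0 with |M| ≥ d·n + 1. Order the items g_1, ..., g_{|M|} so that v(g_1) ≥ v(g_2) ≥ ... ≥ v(g_{|M|}). Let B = {g_{|M|-j} : d(n-1) ≤ j ≤ d·n}, the d+1 most valuable items among the last d·n + 1 items. Then for any partition (P_1, ..., P_n) of M into n parts, v(B) ≥ min_k v(P_k). Hence v(B) ≥ μ, where μ is the maximin share over n agents. -/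
open Finset

/-- A partition of the finite set `M` into `n` labelled (possibly empty) bundles. -/
def IsPartition {β : Type*} [DecidableEq β] {n : ℕ} (M : Finset β)
    (P : Fin n → Finset β) : Prop :=
  (∀ i j, i ≠ j → Disjoint (P i) (P j)) ∧ Finset.univ.biUnion P = M

/-- A strictly monotone map from `Fin k` to `ℕ` bounded below by `a` grows at least linearly. -/
lemma strictMono_ge_add {k : ℕ} (f : Fin k → ℕ) (hf : StrictMono f) (a : ℕ)
    (ha : ∀ i, a ≤ f i) : ∀ i : Fin k, a + i.val ≤ f i := by
  intro ⟨iv, hi⟩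
  induction iv with
  | zero => simpa using ha ⟨0, hi⟩
  | succ j ih =>
    have hj : j < k := Nat.lt_of_succ_lt hi
    have h1 : f ⟨j, hj⟩ < f ⟨j + 1, hi⟩ := hf (by simp [Fin.lt_def])
    have h2 := ih hj
    simp only [Fin.val_mk] at h2 ⊢
    omega

/-- chores with items `g_1, …, g_m` (here 0-indexed as `0, …, m-1`) sorted in
nonincreasing value order (`v` nonpositive and antitone).  With `m ≥ d·n + 1`, the bundle
`B = {g_{m-j} : d(n-1) ≤ j ≤ d·n}` (0-indexed: `{m - 1 - j : d(n-1) ≤ j ≤ d·n}`) satisfies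
`v(B) ≥ min_k v(P_k)` for every `n`-partition `P` of the items, hence `v(B) ≥ μ`. -/
theorem chores_tail_bundle_ge_mms (m n d : ℕ) (hn : 1 ≤ n) (hm : d * n + 1 ≤ m)
    (v : ℕ → ℝ) (hv : ∀ j, v j ≤ 0) (hsorted : ∀ i j, i ≤ j → v j ≤ v i) :
    let B : Finset ℕ := (Finset.Icc (d * (n - 1)) (d * n)).image (fun j => m - 1 - j)
    (∀ P : Fin n → Finset ℕ, IsPartition (Finset.range m) P →
      (Finset.univ.inf' (Finset.univ_nonempty_iff.mpr ⟨⟨0, hn⟩⟩)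
        (fun k => ∑ g ∈ P k, v g)) ≤ ∑ g ∈ B, v g) ∧
    (∀ μ : ℝ,
      IsGreatest {x : ℝ | ∃ P : Fin n → Finset ℕ, IsPartition (Finset.range m) P ∧
          x = Finset.univ.inf' (Finset.univ_nonempty_iff.mpr ⟨⟨0, hn⟩⟩)
            (fun k => ∑ g ∈ P k, v g)} μ →
      μ ≤ ∑ g ∈ B, v g) := by
  intro B
  set a := m - 1 - d * n with ha_def
  have hdn : d * n ≤ m - 1 := by omega
  have hdn1 : d * (n - 1) ≤ d * n := Nat.mul_le_mul_left d (Nat.sub_le n 1)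
  have hmul : d * n = d * (n - 1) + d := by
    cases n with
    | zero => omega
    | succ k => simp [Nat.mul_succ]
  -- B = Icc a (a + d)
  have hB : B = Finset.Icc a (a + d) := by
    ext x
    simp only [B, mem_image, mem_Icc]
    constructor
    · rintro ⟨j, ⟨hj1, hj2⟩, rfl⟩
      omega
    · rintro ⟨hx1, hx2⟩
      exact ⟨m - 1 - x, ⟨by omega, by omega⟩, by omega⟩
  -- sum over B
  have hBsum : ∑ g ∈ B, v g = ∑ i ∈ Finset.range (d + 1), v (a + i) := by
    rw [hB]
    rw [show Finset.Icc a (a + d) = (Finset.range (d + 1)).image (a + ·) by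
      ext x; simp only [mem_Icc, mem_image, mem_range]; constructor
      · rintro ⟨h1, h2⟩; exact ⟨x - a, by omega, by omega⟩
      · rintro ⟨i, hi, rfl⟩; omega]
    rw [Finset.sum_image (by intro x _ y _ h; simp only at h; omega)]
  have main : ∀ P : Fin n → Finset ℕ, IsPartition (Finset.range m) P →
      (Finset.univ.inf' (Finset.univ_nonempty_iff.mpr ⟨⟨0, hn⟩⟩)
        (fun k => ∑ g ∈ P k, v g)) ≤ ∑ g ∈ B, v g := by
    intro P ⟨hdisj, hcover⟩
    set T : Finset ℕ := Finset.Icc a (m - 1) with hT_def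
    have hTcard : T.card = d * n + 1 := by
      rw [hT_def, Nat.card_Icc]; omega
    -- pigeonhole: some bundle contains ≥ d+1 elements of T
    have hTsub : T ⊆ Finset.univ.biUnion (fun i => P i ∩ T) := by
      intro x hx
      have hxm : x ∈ Finset.range m := by
        simp only [hT_def, mem_Icc] at hx; simp; omega
      rw [← hcover] at hxm
      simp only [mem_biUnion, mem_inter] at hxm ⊢
      obtain ⟨i, _, hi⟩ := hxm
      exact ⟨i, mem_univ i, hi, hx⟩
    have hsum : d * n + 1 ≤ ∑ i : Fin n, (P i ∩ T).card := by
      calc d * n + 1 = T.card := hTcard.symm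
        _ ≤ (Finset.univ.biUnion (fun i => P i ∩ T)).card := Finset.card_le_card hTsub
        _ ≤ ∑ i : Fin n, (P i ∩ T).card := Finset.card_biUnion_le
    have hex : ∃ k : Fin n, d + 1 ≤ (P k ∩ T).card := by
      by_contra h
      push_neg at h
      have h3 : ∑ i : Fin n, (P i ∩ T).card ≤ ∑ _i : Fin n, d :=
        Finset.sum_le_sum (fun i _ => by have := h i; omega)
      simp at h3
      rw [Nat.mul_comm n d] at h3
      omega
    obtain ⟨k, hk⟩ := hex
    obtain ⟨S, hSsub, hScard⟩ := Finset.exists_subset_card_eq hk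
    -- v(P k) ≤ v(S)
    have h1 : ∑ g ∈ P k, v g ≤ ∑ g ∈ S, v g := by
      have hSP : S ⊆ P k := hSsub.trans (Finset.inter_subset_left)
      have := Finset.sum_le_sum_of_subset_of_nonneg hSP
        (fun i _ _ => neg_nonneg.mpr (hv i)) (f := fun x => -v x)
      simp only [Finset.sum_neg_distrib] at this
      linarith
    -- v(S) ≤ v(B)
    have h2 : ∑ g ∈ S, v g ≤ ∑ g ∈ B, v g := by
      set e : Fin (d + 1) → ℕ := ⇑(S.orderEmbOfFin hScard) with he
      have hmono : StrictMono e := (S.orderEmbOfFin hScard).strictMono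
      have himg : Finset.univ.image e = S := by
        apply Finset.eq_of_subset_of_card_le
        · intro x hx
          simp only [mem_image] at hx
          obtain ⟨i, _, rfl⟩ := hx
          exact Finset.orderEmbOfFin_mem S hScard i
        · rw [hScard, Finset.card_image_of_injective _ hmono.injective]
          simp
      have hSsum : ∑ g ∈ S, v g = ∑ i : Fin (d + 1), v (e i) := by
        rw [← himg, Finset.sum_image (by intro x _ y _ h; exact hmono.injective h)]
      have hae : ∀ i : Fin (d + 1), a + i.val ≤ e i := by
        apply strictMono_ge_add _ hmono
        intro i
        have hmem := hSsub (Finset.orderEmbOfFin_mem S hScard i)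
        rw [Finset.mem_inter, hT_def, mem_Icc] at hmem
        exact hmem.2.1
      rw [hSsum, hBsum, ← Fin.sum_univ_eq_sum_range]
      exact Finset.sum_le_sum (fun i _ => hsorted _ _ (hae i))
    calc Finset.univ.inf' (Finset.univ_nonempty_iff.mpr ⟨⟨0, hn⟩⟩)
          (fun k => ∑ g ∈ P k, v g) ≤ ∑ g ∈ P k, v g :=
            Finset.inf'_le _ (mem_univ k)
      _ ≤ ∑ g ∈ S, v g := h1
      _ ≤ ∑ g ∈ B, v g := h2
  refine ⟨main, ?_⟩
  rintro μ ⟨⟨P, hP, rfl⟩, -⟩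
  exact main P hP
end

section
/- Tight instance for single-category goods (value computation): fix n ≥ 1, let M = {g_1, ..., g_{3n}} with common valuation v(g_j) = (2n − j)/(3n − 1) if j ≤ n, v(g_j) = (1/(6n−2))·⌈(5n+1−j)/2⌉ if n < j ≤ 3n−2, and v(g_j) = (3n − j)/(3n − 1) otherwise. Define the partition P_k = {g_k, g_{n+k}, g_{3n+1−k}} for k ≤ 2 and P_k = {g_k, g_{3n−2k+3}, g_{3n−2k+4}} for 3 ≤ k ≤ n. Then every bundle of this partition has value exactly 1: v(P_k) = 1 for all k ∈ {1, ..., n}, and each bundle has exactly 3 items (so the partition is feasible under quotas q⁻ = q⁺ = 3). -/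
open Finset

/-- Item values of the tight goods instance (items 1-indexed `1, …, 3n`):
`v j = (2n−j)/(3n−1)` if `j ≤ n`, `v j = ⌈(5n+1−j)/2⌉/(6n−2)` if `n < j ≤ 3n−2`,
and `v j = (3n−j)/(3n−1)` otherwise. -/
noncomputable def tightGoodsVal (n : ℕ) (j : ℕ) : ℝ :=
  if j ≤ n then ((2 * n - j : ℕ) : ℝ) / ((3 * n : ℝ) - 1)
  else if j ≤ 3 * n - 2 then (((5 * n + 2 - j) / 2 : ℕ) : ℝ) / ((6 * n : ℝ) - 2)
  else ((3 * n - j : ℕ) : ℝ) / ((3 * n : ℝ) - 1)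

/-- Bundles of the tight goods instance: `P_k = {k, n+k, 3n+1−k}` for `k ≤ 2` and
`P_k = {k, 3n−2k+3, 3n−2k+4}` for `3 ≤ k ≤ n`. -/
def tightGoodsBundle (n : ℕ) (k : ℕ) : Finset ℕ :=
  if k ≤ 2 then {k, n + k, 3 * n + 1 - k} else {k, 3 * n - 2 * k + 3, 3 * n - 2 * k + 4}

/-!
Every item `j ∈ [1, 3n]` has an explicit owner: items `j ≤ n` own themselves, `n+1` and `3n`
go to `P_1`, `n+2` and `3n−1` to `P_2`, and the remaining items pair up as
`3n−2k+3, 3n−2k+4 ↦ k`. Each `P_k` is the fibre of this owner map over `k`, which gives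
disjointness and coverage at once. Over the common denominator `3n−1` the numerators in `P_k`
sum to `3n−1`; e.g. for `k ≥ 3` they are `2n−k` and twice `(n+k−1)/2`.
-/

section Partition

variable {n j k : ℕ}

def tightGoodsOwner (n j : ℕ) : ℕ :=
  if j ≤ n then j
  else if j = n + 1 ∨ j = 3 * n then 1
  else if j = n + 2 ∨ j = 3 * n - 1 then 2
  else (3 * n + 4 - j) / 2

lemma tightGoodsOwner_mem_Icc (hj : j ∈ Icc 1 (3 * n)) :
    tightGoodsOwner n j ∈ Icc 1 n := by
  rw [mem_Icc] at hj ⊢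
  unfold tightGoodsOwner
  split_ifs <;> omega

lemma tightGoodsBundle_eq_filter (hk : k ∈ Icc 1 n) :
    tightGoodsBundle n k = {j ∈ Icc 1 (3 * n) | tightGoodsOwner n j = k} := by
  rw [mem_Icc] at hk
  ext j
  rw [mem_filter, mem_Icc, tightGoodsBundle, tightGoodsOwner]
  split_ifs <;> simp only [mem_insert, mem_singleton] <;> omega

lemma card_tightGoodsBundle (hk : k ∈ Icc 1 n) : #(tightGoodsBundle n k) = 3 := by
  rw [mem_Icc] at hk
  rw [card_eq_three, tightGoodsBundle]
  split_ifs <;> exact ⟨_, _, _, by omega, by omega, by omega, rfl⟩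

end Partition

section Values

variable {n j m : ℕ}

lemma tightGoodsVal_of_le (hj : j ≤ n) (hm : 2 * n - j = m) :
    tightGoodsVal n j = m / (3 * n - 1) := by
  rw [tightGoodsVal, if_pos hj, hm]

lemma tightGoodsVal_of_lt_of_le (hnj : n < j) (hj : j ≤ 3 * n - 2)
    (hm : (5 * n + 2 - j) / 2 = m) : tightGoodsVal n j = m / (2 * (3 * n - 1)) := by
  rw [tightGoodsVal, if_neg hnj.not_ge, if_pos hj, hm, mul_sub, ← mul_assoc]
  norm_num

lemma tightGoodsVal_of_lt (hj : 3 * n - 2 < j) (hm : 3 * n - j = m) :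
    tightGoodsVal n j = m / (3 * n - 1) := by
  rw [tightGoodsVal, if_neg (by omega), if_neg hj.not_ge, hm]

lemma tightGoodsVal_add_one (hn : 1 ≤ n) : tightGoodsVal n (n + 1) = n / (3 * n - 1) := by
  -- for `n = 1` the item `n + 1 = 3n − 1` lies in the last range
  rcases hn.eq_or_lt with rfl | hn
  · norm_num [tightGoodsVal_of_lt (n := 1) (j := 2) (m := 1)]
  · rw [tightGoodsVal_of_lt_of_le (by omega) (by omega) (m := 2 * n) (by omega)]
    push_cast
    exact mul_div_mul_left _ _ two_ne_zero

end Values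

section BundleValues

variable {n k : ℕ}

lemma three_mul_sub_one_ne_zero (hn : 1 ≤ n) : (3 * n : ℝ) - 1 ≠ 0 := by
  have : (1 : ℝ) ≤ n := by exact_mod_cast hn
  linarith

lemma sum_tightGoodsBundle_one (hn : 1 ≤ n) :
    ∑ j ∈ tightGoodsBundle n 1, tightGoodsVal n j = 1 := by
  have := three_mul_sub_one_ne_zero hn
  rw [tightGoodsBundle, if_pos (by norm_num), sum_insert (by simp; omega), sum_pair (by omega),
    tightGoodsVal_of_le hn rfl, tightGoodsVal_add_one hn, tightGoodsVal_of_lt (m := 0) (by omega)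
    (by omega), Nat.cast_sub (by omega)]
  field_simp
  push_cast
  ring

lemma sum_tightGoodsBundle_two (hn : 2 ≤ n) :
    ∑ j ∈ tightGoodsBundle n 2, tightGoodsVal n j = 1 := by
  have := three_mul_sub_one_ne_zero (n := n) (by omega)
  rw [tightGoodsBundle, if_pos le_rfl, sum_insert (by simp; omega), sum_pair (by omega),
    tightGoodsVal_of_le hn rfl, tightGoodsVal_of_lt_of_le (m := 2 * n) (by omega) (by omega)
    (by omega), tightGoodsVal_of_lt (m := 1) (by omega) (by omega), Nat.cast_sub (by omega)]
  field_simp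
  push_cast
  ring

lemma sum_tightGoodsBundle_of_three_le (hk : 3 ≤ k) (hkn : k ≤ n) :
    ∑ j ∈ tightGoodsBundle n k, tightGoodsVal n j = 1 := by
  have := three_mul_sub_one_ne_zero (n := n) (by omega)
  rw [tightGoodsBundle, if_neg (by omega), sum_insert (by simp; omega), sum_pair (by omega),
    tightGoodsVal_of_le hkn rfl,
    tightGoodsVal_of_lt_of_le (m := n + k - 1) (by omega) (by omega) (by omega),
    tightGoodsVal_of_lt_of_le (m := n + k - 1) (by omega) (by omega) (by omega),
    Nat.cast_sub (by omega), Nat.cast_sub (by omega)]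
  field_simp
  push_cast
  ring

lemma sum_tightGoodsBundle (hk : k ∈ Icc 1 n) :
    ∑ j ∈ tightGoodsBundle n k, tightGoodsVal n j = 1 := by
  rw [mem_Icc] at hk
  obtain rfl | rfl | hk3 : k = 1 ∨ k = 2 ∨ 3 ≤ k := by omega
  · exact sum_tightGoodsBundle_one hk.2
  · exact sum_tightGoodsBundle_two hk.2
  · exact sum_tightGoodsBundle_of_three_le hk3 hk.2

end BundleValues

theorem tight_goods_partition_general (n : ℕ) :
    (∀ k ∈ Finset.Icc 1 n,
        (∑ j ∈ tightGoodsBundle n k, tightGoodsVal n j) = 1 ∧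
        (tightGoodsBundle n k).card = 3) ∧
    (∀ k ∈ Finset.Icc 1 n, ∀ k' ∈ Finset.Icc 1 n, k ≠ k' →
        Disjoint (tightGoodsBundle n k) (tightGoodsBundle n k')) ∧
    (Finset.Icc 1 n).biUnion (tightGoodsBundle n) = Finset.Icc 1 (3 * n) := by
  refine ⟨fun k hk => ⟨sum_tightGoodsBundle hk, card_tightGoodsBundle hk⟩,
    fun k hk k' hk' hne => ?_, ?_⟩
  · rw [tightGoodsBundle_eq_filter hk, tightGoodsBundle_eq_filter hk']
    exact Set.pairwiseDisjoint_filter _ Set.univ _ trivial trivial hne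
  · rw [biUnion_congr rfl fun k hk => tightGoodsBundle_eq_filter hk]
    exact biUnion_filter_eq_of_maps_to fun j hj => tightGoodsOwner_mem_Icc hj

/-- tight instance for single-category goods.  The bundles
`P_1, …, P_n` form a partition of the items `{1, …, 3n}`, each bundle has exactly `3`
items (feasible under `q⁻ = q⁺ = 3`), and each bundle has value exactly `1`. -/
theorem tight_goods_partition (n : ℕ) (hn : 1 ≤ n) :
    (∀ k ∈ Finset.Icc 1 n,
        (∑ j ∈ tightGoodsBundle n k, tightGoodsVal n j) = 1 ∧
        (tightGoodsBundle n k).card = 3) ∧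
    (∀ k ∈ Finset.Icc 1 n, ∀ k' ∈ Finset.Icc 1 n, k ≠ k' →
        Disjoint (tightGoodsBundle n k) (tightGoodsBundle n k')) ∧
    (Finset.Icc 1 n).biUnion (tightGoodsBundle n) = Finset.Icc 1 (3 * n) :=
  tight_goods_partition_general n
end
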